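/- arXiv:1906.04552 — 7 statements merged into one kernel-verified Lean document; each statement's English description precedes it below -/
import Mathlib

section
/- Let J be a Jordan algebra over a field F with center C(J) = {0}, and suppose J = J₁ ⊕ J₂ is the internal direct sum of two ideals J₁ and J₂. Then every derivation D of J satisfies D(J₁) ⊆ J₁ and D(J₂) ⊆ J₂. -/
/-!
Since `J₁ ∩ J₂ = 0`, the two ideals annihilate each other. For `a ∈ J₁` and `z ∈ J₂`,
`D a ∘ z = -(a ∘ D z)` lies in both ideals, so `D a` annihilates `J₂`. Hence the
`J₂`-component of `D a` annihilates all of `J`; such an element is central, hence zero.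
-/

namespace CommBilinearProduct

variable {R M : Type*} [CommRing R] [AddCommGroup M] [Module R M]

def IsIdeal (mul : M →ₗ[R] M →ₗ[R] M) (I : Submodule R M) : Prop :=
  ∀ x : M, ∀ a ∈ I, mul x a ∈ I

def IsCentral (mul : M →ₗ[R] M →ₗ[R] M) (a : M) : Prop :=
  ∀ x y : M, mul (mul a x) y = mul (mul a y) x ∧ mul (mul a x) y = mul (mul x y) a

variable {mul : M →ₗ[R] M →ₗ[R] M}

lemma isCentral_of_forall_mul_eq_zero (comm : ∀ x y : M, mul x y = mul y x) {b : M}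
    (hb : ∀ z : M, mul b z = 0) : IsCentral mul b := by
  intro x y
  simp only [hb, map_zero, LinearMap.zero_apply, true_and]
  rw [comm, hb]

lemma mul_eq_zero_of_mem_of_mem (comm : ∀ x y : M, mul x y = mul y x)
    {I K : Submodule R M} (hI : IsIdeal mul I) (hK : IsIdeal mul K) (hIK : Disjoint I K)
    {x y : M} (hx : x ∈ I) (hy : y ∈ K) : mul x y = 0 :=
  Submodule.disjoint_def.mp hIK _ (comm x y ▸ hI y x hx) (hK x y hy)

lemma mul_apply_mem_eq_zero (comm : ∀ x y : M, mul x y = mul y x)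
    {I K : Submodule R M} (hI : IsIdeal mul I) (hK : IsIdeal mul K) (hIK : Disjoint I K)
    {D : M →ₗ[R] M} (hD : ∀ x y : M, D (mul x y) = mul (D x) y + mul x (D y))
    {a z : M} (ha : a ∈ I) (hz : z ∈ K) : mul (D a) z = 0 := by
  have hsum : mul (D a) z + mul a (D z) = 0 := by
    rw [← hD, mul_eq_zero_of_mem_of_mem comm hI hK hIK ha hz, map_zero]
  have hmemI : mul (D a) z ∈ I := by
    rw [eq_neg_of_add_eq_zero_left hsum, comm]
    exact I.neg_mem (hI _ a ha)
  exact Submodule.disjoint_def.mp hIK _ hmemI (hK _ z hz)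

lemma eq_zero_of_mem_of_forall_mem_mul_eq_zero (comm : ∀ x y : M, mul x y = mul y x)
    (hann : ∀ b : M, (∀ z : M, mul b z = 0) → b = 0)
    {I K : Submodule R M} (hI : IsIdeal mul I) (hK : IsIdeal mul K) (hIK : IsCompl I K)
    {b : M} (hb : b ∈ K) (hbK : ∀ z ∈ K, mul b z = 0) : b = 0 := by
  refine hann b fun z => ?_
  obtain ⟨z₁, z₂, hz₁, hz₂, rfl⟩ := Submodule.codisjoint_iff_exists_add_eq.mp hIK.codisjoint z
  rw [map_add, comm, mul_eq_zero_of_mem_of_mem comm hI hK hIK.disjoint hz₁ hb, hbK z₂ hz₂,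
    add_zero]

lemma apply_mem_of_isCompl (comm : ∀ x y : M, mul x y = mul y x)
    (hann : ∀ b : M, (∀ z : M, mul b z = 0) → b = 0)
    {I K : Submodule R M} (hI : IsIdeal mul I) (hK : IsIdeal mul K) (hIK : IsCompl I K)
    {D : M →ₗ[R] M} (hD : ∀ x y : M, D (mul x y) = mul (D x) y + mul x (D y))
    {a : M} (ha : a ∈ I) : D a ∈ I := by
  obtain ⟨b₁, b₂, hb₁, hb₂, hDa⟩ :=
    Submodule.codisjoint_iff_exists_add_eq.mp hIK.codisjoint (D a)
  suffices b₂ = 0 by rwa [← hDa, this, add_zero]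
  refine eq_zero_of_mem_of_forall_mem_mul_eq_zero comm hann hI hK hIK hb₂ fun z hz => ?_
  have hDaz := mul_apply_mem_eq_zero comm hI hK hIK.disjoint hD ha hz
  rwa [← hDa, map_add, LinearMap.add_apply,
    mul_eq_zero_of_mem_of_mem comm hI hK hIK.disjoint hb₁ hz, zero_add] at hDaz

end CommBilinearProduct

open CommBilinearProduct in
theorem derivation_preserves_ideals_of_direct_sum_general
    {F J : Type*} [Field F] [AddCommGroup J] [Module F J]
    (mul : J →ₗ[F] J →ₗ[F] J)
    (comm : ∀ x y : J, mul x y = mul y x)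
    (hcenter : ∀ a : J,
      (∀ x y : J, mul (mul a x) y = mul (mul a y) x ∧ mul (mul a x) y = mul (mul x y) a)
        → a = 0)
    (J₁ J₂ : Submodule F J)
    (hJ₁ : ∀ x : J, ∀ a ∈ J₁, mul x a ∈ J₁)
    (hJ₂ : ∀ x : J, ∀ a ∈ J₂, mul x a ∈ J₂)
    (hdisj : J₁ ⊓ J₂ = ⊥)
    (hsum : J₁ ⊔ J₂ = ⊤)
    (D : J →ₗ[F] J)
    (hD : ∀ x y : J, D (mul x y) = mul (D x) y + mul x (D y)) :
    (∀ a ∈ J₁, D a ∈ J₁) ∧ (∀ a ∈ J₂, D a ∈ J₂) := by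
  have hann : ∀ b : J, (∀ z : J, mul b z = 0) → b = 0 := fun b hb =>
    hcenter b (isCentral_of_forall_mul_eq_zero comm hb)
  have hcompl : IsCompl J₁ J₂ := ⟨disjoint_iff.mpr hdisj, codisjoint_iff.mpr hsum⟩
  exact ⟨fun a ha => apply_mem_of_isCompl comm hann hJ₁ hJ₂ hcompl hD ha,
    fun a ha => apply_mem_of_isCompl comm hann hJ₂ hJ₁ hcompl.symm hD ha⟩

/-- If a Jordan algebra `J` over a field `F` has trivial center and
is the internal direct sum of two ideals `J₁ ⊕ J₂`, then every derivation of `J`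
preserves `J₁` and `J₂`. -/
theorem derivation_preserves_ideals_of_direct_sum
    {F J : Type*} [Field F] [AddCommGroup J] [Module F J]
    (mul : J →ₗ[F] J →ₗ[F] J)
    (comm : ∀ x y : J, mul x y = mul y x)
    (jordan : ∀ x y : J, mul (mul (mul x x) y) x = mul (mul x x) (mul x y))
    (hcenter : ∀ a : J,
      (∀ x y : J, mul (mul a x) y = mul (mul a y) x ∧ mul (mul a x) y = mul (mul x y) a)
        → a = 0)
    (J₁ J₂ : Submodule F J)
    (hJ₁ : ∀ x : J, ∀ a ∈ J₁, mul x a ∈ J₁)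
    (hJ₂ : ∀ x : J, ∀ a ∈ J₂, mul x a ∈ J₂)
    (hdisj : J₁ ⊓ J₂ = ⊥)
    (hsum : J₁ ⊔ J₂ = ⊤)
    (D : J →ₗ[F] J)
    (hD : ∀ x y : J, D (mul x y) = mul (D x) y + mul x (D y)) :
    (∀ a ∈ J₁, D a ∈ J₁) ∧ (∀ a ∈ J₂, D a ∈ J₂) :=
  derivation_preserves_ideals_of_direct_sum_general mul comm hcenter J₁ J₂ hJ₁ hJ₂ hdisj hsum D hD
end

section
/- Let F be a field of characteristic 0 and A an associative F-algebra such that every derivation D of the Jordan algebra A⁺ has the form D(x) = xd − dx for some d ∈ A (this holds when A is simple). Let L denote A viewed as a Lie algebra under the commutator [a, b] = ab − ba and Z(L) its center. Then Der(A⁺) is a simple Lie algebra if and only if the quotient Lie algebra L/Z(L) is a simple Lie algebra. -/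
attribute [local instance] LieRing.ofAssociativeRing

section Defs

variable {F J : Type*} [Field F] [AddCommGroup J] [Module F J]

/-- The derivations of a bilinear product, as a Lie subalgebra of the
endomorphism algebra of the underlying module. -/
def derSet (mul : J →ₗ[F] J →ₗ[F] J) : LieSubalgebra F (Module.End F J) where
  carrier := {D | ∀ x y : J, D (mul x y) = mul (D x) y + mul x (D y)}
  add_mem' := by
    intro D E hD hE
    simp only [Set.mem_setOf_eq] at hD hE ⊢
    intro x y
    simp only [LinearMap.add_apply, hD, hE, map_add, LinearMap.add_apply]
    abel
  zero_mem' := by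
    simp only [Set.mem_setOf_eq]
    intro x y; simp
  smul_mem' := by
    intro c D hD
    simp only [Set.mem_setOf_eq] at hD ⊢
    intro x y
    simp only [LinearMap.smul_apply, hD, map_smul, smul_add, LinearMap.smul_apply]
  lie_mem' := by
    intro D E hD hE
    simp only [Set.mem_setOf_eq] at hD hE ⊢
    intro x y
    simp only [LieRing.of_associative_ring_bracket, LinearMap.sub_apply,
      Module.End.mul_apply, hD, hE, map_add, map_sub, LinearMap.add_apply,
      LinearMap.sub_apply]
    abel

end Defs

/-!
For `d ∈ A`, the inner derivation `ad d = ⁅d, ·⁆` of `A` is also a derivation of `A⁺`, whose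
product is the symmetrised associative one. This gives a Lie homomorphism `A → Der(A⁺)`, surjective
by hypothesis (`x ↦ xd - dx` is `ad (-d)`) and with kernel the center of `A`. Hence
`L/Z(L) ≃ Der(A⁺)` as Lie algebras, and simplicity is invariant under Lie isomorphisms.
-/

section LieEquiv

variable {R L L' : Type*} [CommRing R] [LieRing L] [LieAlgebra R L] [LieRing L'] [LieAlgebra R L']

theorem LieAlgebra.IsSimple.of_lieEquiv [h : LieAlgebra.IsSimple R L] (e : L ≃ₗ⁅R⁆ L') :
    LieAlgebra.IsSimple R L' where
  eq_bot_or_eq_top I := by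
    have hI : (I.comap e.toLieHom).comap e.symm.toLieHom = I := by
      ext x; simp [LieIdeal.mem_comap]
    rcases h.eq_bot_or_eq_top (I.comap e.toLieHom) with hcomap | hcomap <;> rw [hcomap] at hI <;> rw [← hI]
    · left; ext x; simp [LieIdeal.mem_comap]
    · right; ext x; simp [LieIdeal.mem_comap]
  non_abelian hab := h.non_abelian ((lie_abelian_iff_equiv_lie_abelian e).mpr hab)

theorem LieAlgebra.isSimple_congr (e : L ≃ₗ⁅R⁆ L') :
    LieAlgebra.IsSimple R L ↔ LieAlgebra.IsSimple R L' :=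
  ⟨fun _ => .of_lieEquiv e, fun _ => .of_lieEquiv e.symm⟩

noncomputable def LieHom.quotKerEquivOfSurjective (f : L →ₗ⁅R⁆ L') (hf : Function.Surjective f) :
    (L ⧸ f.ker) ≃ₗ⁅R⁆ L' :=
  f.quotKerEquivRange.trans <|
    (LieEquiv.ofEq _ _ (congrArg SetLike.coe (f.range_eq_top.2 hf))).trans LieSubalgebra.topEquiv

end LieEquiv

section Jordan

variable {F A : Type*} [Field F] [Ring A] [Algebra F A] {jmul : A →ₗ[F] A →ₗ[F] A}
  (hjmul : ∀ x y : A, jmul x y = (2 : F)⁻¹ • (x * y + y * x))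
include hjmul

theorem ad_mem_derSet (d : A) : LieAlgebra.ad F A d ∈ derSet jmul := by
  intro x y
  simp only [LieAlgebra.ad_apply, hjmul, LieRing.of_associative_ring_bracket,
    mul_smul_comm, smul_mul_assoc, ← smul_sub, ← smul_add]
  congr 1
  noncomm_ring

def adToDerSet : A →ₗ⁅F⁆ derSet jmul where
  toFun d := ⟨LieAlgebra.ad F A d, ad_mem_derSet hjmul d⟩
  map_add' a b := by ext; simp
  map_smul' c a := by ext; simp
  map_lie' {_ _} := by ext; simp

theorem ker_adToDerSet : (adToDerSet hjmul).ker = LieAlgebra.center F A := by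
  rw [← LieAlgebra.self_module_ker_eq_center, ← LieAlgebra.ad_ker_eq_self_module_ker]
  ext d
  exact Subtype.ext_iff

theorem adToDerSet_surjective
    (hinner : ∀ D ∈ derSet jmul, ∃ d : A, ∀ x : A, D x = x * d - d * x) :
    Function.Surjective (adToDerSet hjmul) := by
  intro D
  obtain ⟨d, hd⟩ := hinner D D.2
  refine ⟨-d, Subtype.ext <| LinearMap.ext fun x => ?_⟩
  simp [adToDerSet, hd, LieRing.of_associative_ring_bracket]

end Jordan

theorem derSet_symAlg_simple_iff_quotient_center_simple_general
    {F A : Type*} [Field F] [Ring A] [Algebra F A]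
    -- the Jordan product of `A⁺`
    (jmul : A →ₗ[F] A →ₗ[F] A)
    (hjmul : ∀ x y : A, jmul x y = (2 : F)⁻¹ • (x * y + y * x))
    -- every derivation of `A⁺` is of the form `x ↦ xd - dx`
    (hinner : ∀ D ∈ derSet jmul, ∃ d : A, ∀ x : A, D x = x * d - d * x) :
    LieAlgebra.IsSimple F ↥(derSet jmul)
      ↔ LieAlgebra.IsSimple F (A ⧸ LieAlgebra.center F A) := by
  rw [← ker_adToDerSet hjmul]
  exact (LieAlgebra.isSimple_congr
    ((adToDerSet hjmul).quotKerEquivOfSurjective (adToDerSet_surjective hjmul hinner))).symm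

/-- Let `F` be a field of characteristic `0` and `A` an
associative `F`-algebra such that every derivation of the Jordan algebra `A⁺`
(with product `a ∘ b = (ab + ba)/2`) is of the form `x ↦ xd - dx` for some
`d ∈ A`.  Let `L` be `A` with the commutator bracket and `Z(L)` its center.
Then `Der(A⁺)` is a simple Lie algebra iff `L/Z(L)` is a simple Lie algebra. -/
theorem derSet_symAlg_simple_iff_quotient_center_simple
    {F A : Type*} [Field F] [CharZero F] [Ring A] [Algebra F A]
    -- the Jordan product of `A⁺`
    (jmul : A →ₗ[F] A →ₗ[F] A)
    (hjmul : ∀ x y : A, jmul x y = (2 : F)⁻¹ • (x * y + y * x))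
    -- every derivation of `A⁺` is of the form `x ↦ xd - dx`
    (hinner : ∀ D ∈ derSet jmul, ∃ d : A, ∀ x : A, D x = x * d - d * x) :
    LieAlgebra.IsSimple F ↥(derSet jmul)
      ↔ LieAlgebra.IsSimple F (A ⧸ LieAlgebra.center F A) :=
  derSet_symAlg_simple_iff_quotient_center_simple_general jmul hjmul hinner
end

section
/- Let F be a field of characteristic ≠ 2, let n ≥ 1, and let α₁, …, αₙ ∈ F be nonzero. Then the Lie algebra Der(J(α)) of derivations of the spin factor J(α) is isomorphic, as an F-Lie algebra, to the Lie algebra M of n×n matrices v = (v_{ij}) over F satisfying αᵢ v_{ji} + αⱼ v_{ij} = 0 for all i, j (the matrices skew-adjoint with respect to the diagonal matrix diag(α₁, …, αₙ)), equipped with the commutator bracket. -/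
/-
A derivation `D` of the spin factor `F × V` of a bilinear form `B` kills the unit `(1, 0)`.
Since `v ∘ v = B v v • (1, 0)`, applying `D` gives `(D v) ∘ v + v ∘ (D v) = 0`, whose vector part is
`2 (D v).1 • v`; as `2 ≠ 0` the scalar part of `D v` vanishes. Hence `D = (a, v) ↦ (0, A v)` for an
endomorphism `A` of `V`, and the derivation rule on `v ∘ w = B v w • (1, 0)` says precisely that
`A` is skew-adjoint for `B`. For the diagonal form of `α` on `Fin n → F`, skew-adjoint
endomorphisms are the skew-adjoint matrices with respect to `diagonal α`.
-/

attribute [local instance 100] LieRing.ofAssociativeRing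

open LinearMap (BilinForm)

theorem mem_skewAdjointLieSubalgebra {R M : Type*} [CommRing R] [AddCommGroup M] [Module R M]
    {B : BilinForm R M} {f : Module.End R M} :
    f ∈ skewAdjointLieSubalgebra B ↔ B.IsSkewAdjoint f :=
  B.mem_skewAdjointSubmodule f

noncomputable def skewAdjointLieSubalgebraToLinearMap₂'Equiv {R n : Type*} [CommRing R]
    [Fintype n] [DecidableEq n] (J : Matrix n n R) :
    skewAdjointLieSubalgebra (Matrix.toLinearMap₂' R J) ≃ₗ⁅R⁆ skewAdjointMatricesLieSubalgebra J :=
  LieEquiv.ofSubalgebras _ _ lieEquivMatrix' <| by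
    ext A
    rw [LieSubalgebra.mem_map_submodule, Submodule.mem_map_equiv, LieSubalgebra.mem_toSubmodule,
      mem_skewAdjointMatricesLieSubalgebra, mem_skewAdjointMatricesSubmodule,
      show lieEquivMatrix'.toLinearEquiv.symm A = Matrix.toLin' A from rfl,
      mem_skewAdjointLieSubalgebra, LinearMap.IsSkewAdjoint, ← LinearMap.coe_neg, ← map_neg,
      isAdjointPair_toLinearMap₂']
    rfl

section SpinFactor

variable {F V : Type*} [Field F] [AddCommGroup V] [Module F V] (B : BilinForm F V)

def spinMul : (F × V) →ₗ[F] (F × V) →ₗ[F] (F × V) :=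
  LinearMap.mk₂ F (fun p q => (p.1 * q.1 + B p.2 q.2, p.1 • q.2 + q.1 • p.2))
    (fun _ _ _ => Prod.ext (by simp; ring) (by simp; module))
    (fun _ _ _ => Prod.ext (by simp; ring) (by simp; module))
    (fun _ _ _ => Prod.ext (by simp; ring) (by simp; module))
    (fun _ _ _ => Prod.ext (by simp; ring) (by simp; module))

@[simp]
theorem spinMul_apply (p q : F × V) :
    spinMul B p q = (p.1 * q.1 + B p.2 q.2, p.1 • q.2 + q.1 • p.2) :=
  rfl

theorem spinMul_one_left (p : F × V) : spinMul B (1, 0) p = p := by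
  ext <;> simp

theorem spinMul_one_right (p : F × V) : spinMul B p (1, 0) = p := by
  ext <;> simp

def prodMapZeroLieHom : Module.End F V →ₗ⁅F⁆ Module.End F (F × V) where
  toFun A := LinearMap.prodMap 0 A
  map_add' _ _ := by ext <;> simp
  map_smul' _ _ := by ext <;> simp
  map_lie' := by
    intros
    ext <;> simp [LieRing.of_associative_ring_bracket]

theorem prodMapZeroLieHom_injective :
    Function.Injective (prodMapZeroLieHom : Module.End F V →ₗ⁅F⁆ Module.End F (F × V)) :=
  fun _ _ h => LinearMap.ext fun v => congrArg Prod.snd (LinearMap.congr_fun h (0, v))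

theorem prodMap_zero_mem_derSet_spinMul_iff (A : Module.End F V) :
    LinearMap.prodMap 0 A ∈ derSet (spinMul B) ↔ A ∈ skewAdjointLieSubalgebra B := by
  rw [mem_skewAdjointLieSubalgebra]
  constructor
  · intro hA v w
    rw [Pi.neg_apply, map_neg, eq_neg_iff_add_eq_zero]
    simpa [eq_comm] using congrArg Prod.fst (hA (0, v) (0, w))
  · intro hA p q
    ext
    · simp [hA p.2 q.2]
    · simp [add_comm]

variable {B} in
theorem eq_prodMap_zero_of_mem_derSet_spinMul (h2 : (2 : F) ≠ 0) {D : Module.End F (F × V)}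
    (hD : D ∈ derSet (spinMul B)) :
    D = LinearMap.prodMap 0 (LinearMap.snd F F V ∘ₗ D ∘ₗ LinearMap.inr F F V) := by
  have hD_one : D (1, 0) = 0 := by
    have h := hD (1, 0) (1, 0)
    rwa [spinMul_one_left, spinMul_one_left, spinMul_one_right, left_eq_add] at h
  have hD_fst : ∀ v, (D (0, v)).1 = 0 := by
    intro v
    have h := congrArg Prod.snd (hD (0, v) (0, v))
    rw [show spinMul B (0, v) (0, v) = B v v • (1, 0) by ext <;> simp, map_smul, hD_one,
      smul_zero] at h
    simp only [spinMul_apply, Prod.snd_add, Prod.snd_zero, zero_smul, add_zero, zero_add] at h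
    rw [← two_smul F, smul_smul, eq_comm, smul_eq_zero] at h
    rcases h with h | rfl
    · exact (mul_eq_zero.1 h).resolve_left h2
    · rw [Prod.mk_zero_zero, map_zero, Prod.fst_zero]
  ext <;> simp [hD_one, hD_fst, Prod.mk_zero_zero]

theorem derSet_spinMul_eq_map (h2 : (2 : F) ≠ 0) :
    derSet (spinMul B) = (skewAdjointLieSubalgebra B).map prodMapZeroLieHom := by
  ext D
  rw [LieSubalgebra.mem_map]
  constructor
  · intro hD
    have hDA := eq_prodMap_zero_of_mem_derSet_spinMul h2 hD
    exact ⟨_, (prodMap_zero_mem_derSet_spinMul_iff B _).1 (hDA ▸ hD), hDA.symm⟩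
  · rintro ⟨A, hA, rfl⟩
    exact (prodMap_zero_mem_derSet_spinMul_iff B A).2 hA

noncomputable def skewAdjointLieSubalgebraEquivDerSetSpinMul (h2 : (2 : F) ≠ 0) :
    skewAdjointLieSubalgebra B ≃ₗ⁅F⁆ derSet (spinMul B) :=
  (LieSubalgebra.equivMapOfInjective _ _ prodMapZeroLieHom_injective).trans
    (LieEquiv.ofEq _ _ (by rw [derSet_spinMul_eq_map B h2]))

end SpinFactor

theorem eq_spinMul_toLinearMap₂'_diagonal {F ι : Type*} [Field F] [Fintype ι] [DecidableEq ι]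
    (α : ι → F) (mul : (F × (ι → F)) →ₗ[F] (F × (ι → F)) →ₗ[F] (F × (ι → F)))
    (hcomm : ∀ p q, mul p q = mul q p)
    (hone : ∀ p, mul ((1 : F), (0 : ι → F)) p = p)
    (hdiag : ∀ i, mul ((0 : F), Pi.single i (1 : F)) ((0 : F), Pi.single i (1 : F)) =
      α i • ((1 : F), (0 : ι → F)))
    (hoff : ∀ i j, i ≠ j → mul ((0 : F), Pi.single i (1 : F)) ((0 : F), Pi.single j (1 : F)) = 0) :
    mul = spinMul (Matrix.toLinearMap₂' F (Matrix.diagonal α)) := by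
  refine LinearMap.ext_basis ((Module.Basis.singleton Unit F).prod (Pi.basisFun F ι))
    ((Module.Basis.singleton Unit F).prod (Pi.basisFun F ι)) ?_
  rintro (_ | i) (_ | j)
  · simpa using hone (1, 0)
  · simpa using hone (0, Pi.single j 1)
  · simpa [hcomm _ ((1 : F), (0 : ι → F))] using hone (0, Pi.single i 1)
  · obtain rfl | hij := eq_or_ne i j
    · simp [hdiag, Matrix.toLinearMap₂'_apply']
    · simp [hoff i j hij, Matrix.toLinearMap₂'_apply', hij.symm, Prod.mk_zero_zero]

theorem derSet_spinFactor_iso_skewAdjointMatrices_general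
    {F : Type*} [Field F] (h2 : (2 : F) ≠ 0)
    (n : ℕ) (α : Fin n → F)
    -- the spin factor product on `F × (Fin n → F)`
    (jmul : (F × (Fin n → F)) →ₗ[F] (F × (Fin n → F)) →ₗ[F] (F × (Fin n → F)))
    (hcomm : ∀ p q, jmul p q = jmul q p)
    (hone : ∀ p, jmul ((1 : F), (0 : Fin n → F)) p = p)
    (hdiag : ∀ i : Fin n, jmul ((0 : F), Pi.single i (1 : F))
      ((0 : F), Pi.single i (1 : F)) = α i • ((1 : F), (0 : Fin n → F)))
    (hoff : ∀ i j : Fin n, i ≠ j → jmul ((0 : F), Pi.single i (1 : F))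
      ((0 : F), Pi.single j (1 : F)) = 0) :
    Nonempty (↥(derSet jmul) ≃ₗ⁅F⁆
      ↥(skewAdjointMatricesLieSubalgebra (Matrix.diagonal α))) := by
  obtain rfl := eq_spinMul_toLinearMap₂'_diagonal α jmul hcomm hone hdiag hoff
  exact ⟨(skewAdjointLieSubalgebraEquivDerSetSpinMul _ h2).symm.trans
    (skewAdjointLieSubalgebraToLinearMap₂'Equiv _)⟩

/-- Let `F` be a field of characteristic `≠ 2`, `n ≥ 1`, and
`α₁, …, αₙ ∈ F` nonzero.  The spin factor `J(α)` is the Jordan algebra on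
`F × (Fin n → F)` whose basis `{1, u₁, …, uₙ}` (where `1 = (1,0)` and
`uᵢ = (0, eᵢ)`) satisfies `1 ∘ x = x`, `uᵢ ∘ uᵢ = αᵢ • 1` and `uᵢ ∘ uⱼ = 0`
for `i ≠ j`.  Then `Der (J(α))` is isomorphic as an `F`-Lie algebra to the Lie
algebra of `n × n` matrices `v` with `αᵢ v_{ji} + αⱼ v_{ij} = 0` for all
`i, j`, i.e. the matrices skew-adjoint w.r.t. `diag(α₁, …, αₙ)`. -/
theorem derSet_spinFactor_iso_skewAdjointMatrices
    {F : Type*} [Field F] (h2 : (2 : F) ≠ 0)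
    (n : ℕ) (hn : 1 ≤ n) (α : Fin n → F) (hα : ∀ i, α i ≠ 0)
    -- the spin factor product on `F × (Fin n → F)`
    (jmul : (F × (Fin n → F)) →ₗ[F] (F × (Fin n → F)) →ₗ[F] (F × (Fin n → F)))
    (hcomm : ∀ p q, jmul p q = jmul q p)
    (hone : ∀ p, jmul ((1 : F), (0 : Fin n → F)) p = p)
    (hdiag : ∀ i : Fin n, jmul ((0 : F), Pi.single i (1 : F))
      ((0 : F), Pi.single i (1 : F)) = α i • ((1 : F), (0 : Fin n → F)))
    (hoff : ∀ i j : Fin n, i ≠ j → jmul ((0 : F), Pi.single i (1 : F))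
      ((0 : F), Pi.single j (1 : F)) = 0) :
    Nonempty (↥(derSet jmul) ≃ₗ⁅F⁆
      ↥(skewAdjointMatricesLieSubalgebra (Matrix.diagonal α))) :=
  derSet_spinFactor_iso_skewAdjointMatrices_general h2 n α jmul hcomm hone hdiag hoff
end

section
/- Let F be a field of characteristic 0, let n ≥ 3 with n ≠ 4, and let α₁, …, αₙ ∈ F be nonzero. Then the Lie algebra of n×n matrices v = (v_{ij}) over F satisfying αᵢ v_{ji} + αⱼ v_{ij} = 0 for all i, j (the matrices skew-adjoint with respect to the diagonal matrix diag(α₁, …, αₙ)), equipped with the commutator bracket, is a simple Lie algebra. -/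
/-!
Write `E i j = α j • e i j - α i • e j i` for the spanning elements of the Lie algebra. For
`i ≠ j`, the operator `-(α i * α j)⁻¹ • (ad (E i j))²` keeps exactly the entries `(a, b)` with
exactly one of `a, b` in `{i, j}` and zeroes the others, so every ideal is stable under it and
under its complement. These masks isolate any nonzero entry `x p q` of an element of an ideal:
an entry at a pair `{a, b}` meeting `{p, q}` once is removed by the mask of `{a, b}` itself, and
one at a pair disjoint from `{p, q}` by the complementary mask of `{a, t}` for a fifth index `t`,
which exists because `n ≠ 4`. Hence a nonzero ideal contains some `E p q`, so by
`⁅E i k, E k j⁆ = α k • E i j` it contains every `E i j`, and these span.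
-/

open Matrix

theorem Fintype.exists_ne_of_card_ne_four {ι : Type*} [Fintype ι] (h4 : Fintype.card ι ≠ 4)
    {a b c d : ι} (hab : a ≠ b) (hac : a ≠ c) (had : a ≠ d) (hbc : b ≠ c) (hbd : b ≠ d)
    (hcd : c ≠ d) : ∃ t, t ≠ a ∧ t ≠ b ∧ t ≠ c ∧ t ≠ d := by
  classical
  have hcard : ({a, b, c, d} : Finset ι).card = 4 :=
    Finset.card_eq_four.2 ⟨a, b, c, d, hab, hac, had, hbc, hbd, hcd, rfl⟩
  have hlt : ({a, b, c, d} : Finset ι).card < (Finset.univ : Finset ι).card := by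
    have := Finset.card_le_univ ({a, b, c, d} : Finset ι)
    rw [Finset.card_univ]
    omega
  obtain ⟨t, -, ht⟩ := Finset.exists_mem_notMem_of_card_lt_card hlt
  exact ⟨t, by simpa [not_or] using ht⟩

namespace LieAlgebra.Orthogonal

variable {ι F : Type*} [DecidableEq ι] [Field F]

section Matrices

variable (α : ι → F)

def skewSingle (i j : ι) : Matrix ι ι F :=
  α j • single i j 1 - α i • single j i 1

theorem skewSingle_apply (i j a b : ι) :
    skewSingle α i j a b =
      (if i = a ∧ j = b then α j else 0) - (if j = a ∧ i = b then α i else 0) := by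
  simp [skewSingle, single, mul_ite]

theorem skewSingle_swap (i j : ι) : skewSingle α j i = -skewSingle α i j := by
  rw [skewSingle, skewSingle, neg_sub]

theorem skewSingle_self (i : ι) : skewSingle α i i = 0 := sub_self _

variable [Fintype ι]

theorem mem_skewAdjoint_diagonal_iff {v : Matrix ι ι F} :
    v ∈ skewAdjointMatricesLieSubalgebra (diagonal α) ↔
      ∀ a b, α b * v b a + α a * v a b = 0 := by
  rw [mem_skewAdjointMatricesLieSubalgebra, mem_skewAdjointMatricesSubmodule,
    Matrix.IsSkewAdjoint, IsAdjointPair, ← Matrix.ext_iff]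
  simp only [mul_diagonal, diagonal_mul, transpose_apply, Matrix.neg_apply]
  refine forall₂_congr fun a b => ?_
  constructor <;> intro h <;> linear_combination h

theorem skewSingle_mem (i j : ι) :
    skewSingle α i j ∈ skewAdjointMatricesLieSubalgebra (diagonal α) := by
  rw [mem_skewAdjoint_diagonal_iff]
  intro a b
  simp only [skewSingle_apply]
  split_ifs <;> grind

theorem lie_skewSingle_apply (v : Matrix ι ι F) (i j a b : ι) :
    ⁅skewSingle α i j, v⁆ a b =
      (if i = a then α j * v j b else 0) - (if j = a then α i * v i b else 0)
        - ((if j = b then α j * v a i else 0) - (if i = b then α i * v a j else 0)) := by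
  simp [Ring.lie_def, skewSingle, mul_sub, Matrix.mul_apply, single, ite_and, mul_comm]

theorem lie_skewSingle_skewSingle {i j k : ι} (hij : i ≠ j) (hjk : j ≠ k) (hik : i ≠ k) :
    ⁅skewSingle α i j, skewSingle α j k⁆ = α j • skewSingle α i k := by
  simp [Ring.lie_def, skewSingle, sub_mul, mul_sub, single_mul_single_of_ne, smul_sub,
    hij, hjk, hik, hij.symm, hjk.symm, hik.symm]

variable {α} [NeZero (2 : F)] (hα : ∀ i, α i ≠ 0)
include hα

theorem apply_self_eq_zero_of_mem {v : Matrix ι ι F}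
    (hv : v ∈ skewAdjointMatricesLieSubalgebra (diagonal α)) (a : ι) : v a a = 0 := by
  have h := (mem_skewAdjoint_diagonal_iff α).1 hv a a
  rw [← two_mul, mul_eq_zero, mul_eq_zero] at h
  simpa [hα a, NeZero.ne] using h

theorem lie_skewSingle_lie_skewSingle_apply {v : Matrix ι ι F}
    (hv : v ∈ skewAdjointMatricesLieSubalgebra (diagonal α)) {i j : ι} (hij : i ≠ j)
    (a b : ι) :
    ⁅skewSingle α i j, ⁅skewSingle α i j, v⁆⁆ a b =
      if Xor (a = i ∨ a = j) (b = i ∨ b = j) then -(α i * α j) * v a b else 0 := by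
  have hskew := (mem_skewAdjoint_diagonal_iff α).1 hv
  have hii := apply_self_eq_zero_of_mem hα hv i
  have hjj := apply_self_eq_zero_of_mem hα hv j
  have hskew_ij := hskew i j
  simp only [lie_skewSingle_apply]
  split_ifs <;> grind

theorem sum_smul_skewSingle {v : Matrix ι ι F}
    (hv : v ∈ skewAdjointMatricesLieSubalgebra (diagonal α)) :
    ∑ k, ∑ l, (v k l / (2 * α l)) • skewSingle α k l = v := by
  ext a b
  have h := (mem_skewAdjoint_diagonal_iff α).1 hv a b
  simp only [Matrix.sum_apply, Matrix.smul_apply, skewSingle_apply, ite_and, smul_eq_mul, mul_sub,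
    mul_ite, mul_zero, Finset.sum_sub_distrib, Finset.sum_ite_irrel, Finset.sum_ite_eq',
    Finset.mem_univ, ↓reduceIte, Finset.sum_const_zero]
  field_simp [hα a, hα b, NeZero.ne (2 : F)]
  linear_combination -h

end Matrices

section LieIdeal

variable [Fintype ι] {α : ι → F}

local notation "𝔤" => skewAdjointMatricesLieSubalgebra (diagonal α)

variable (α) in
def skewBasis (i j : ι) : 𝔤 := ⟨skewSingle α i j, skewSingle_mem α i j⟩

@[simp]
theorem coe_skewBasis (i j : ι) : (skewBasis α i j : Matrix ι ι F) = skewSingle α i j := rfl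

theorem skewBasis_swap (i j : ι) : skewBasis α j i = -skewBasis α i j :=
  Subtype.ext (skewSingle_swap α i j)

theorem skewBasis_self (i : ι) : skewBasis α i i = 0 :=
  Subtype.ext (skewSingle_self α i)

theorem lie_skewBasis_skewBasis {i j k : ι} (hij : i ≠ j) (hjk : j ≠ k) (hik : i ≠ k) :
    ⁅skewBasis α i j, skewBasis α j k⁆ = α j • skewBasis α i k :=
  Subtype.ext (lie_skewSingle_skewSingle α hij hjk hik)

variable (hα : ∀ i, α i ≠ 0)
include hα

theorem not_isLieAbelian {i j k : ι} (hij : i ≠ j) (hjk : j ≠ k) (hik : i ≠ k) :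
    ¬IsLieAbelian 𝔤 := by
  intro h
  have hzero := congrArg (fun x : 𝔤 => (x : Matrix ι ι F) i k)
    ((lie_skewBasis_skewBasis hij hjk hik).symm.trans (h.trivial _ _))
  simp [skewSingle_apply, hik, hik.symm, hα j, hα k] at hzero

theorem skewBasis_mem_of_mem (I : LieIdeal F 𝔤) {i j k : ι} (hik : i ≠ k) (hkj : k ≠ j)
    (hij : i ≠ j) (h : skewBasis α k j ∈ I) : skewBasis α i j ∈ I := by
  have hmem : α k • skewBasis α i j ∈ I := by
    rw [← lie_skewBasis_skewBasis hik hkj hij]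
    exact I.lie_mem h
  exact (I.toSubmodule.smul_mem_iff (hα k)).1 hmem

theorem skewBasis_mem_of_skewBasis_mem (I : LieIdeal F 𝔤) {p q : ι} (hpq : p ≠ q)
    (h : skewBasis α p q ∈ I) (i j : ι) : skewBasis α i j ∈ I := by
  have hcol : ∀ i, skewBasis α i q ∈ I := by
    intro i
    by_cases hip : i = p
    · exact hip ▸ h
    by_cases hiq : i = q
    · rw [hiq, skewBasis_self]
      exact I.zero_mem
    exact skewBasis_mem_of_mem hα I hip hpq hiq h
  have hrow : ∀ j, skewBasis α q j ∈ I := fun j => by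
    rw [skewBasis_swap]
    exact neg_mem (hcol j)
  by_cases hiq : i = q
  · exact hiq ▸ hrow j
  by_cases hij : i = j
  · rw [hij, skewBasis_self]
    exact I.zero_mem
  by_cases hqj : q = j
  · exact hqj ▸ hcol i
  exact skewBasis_mem_of_mem hα I hiq hqj hij (hrow j)

theorem eq_top_of_forall_skewBasis_mem [NeZero (2 : F)] (I : LieIdeal F 𝔤)
    (h : ∀ i j, skewBasis α i j ∈ I) : I = ⊤ := by
  refine eq_top_iff.2 fun z _ => ?_
  have hz : z = ∑ k, ∑ l, ((z : Matrix ι ι F) k l / (2 * α l)) • skewBasis α k l := by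
    ext1
    simp [sum_smul_skewSingle hα z.2]
  rw [hz]
  exact sum_mem fun k _ => sum_mem fun l _ => I.smul_mem _ (h k l)

theorem exists_mem_apply_eq_ite_xor [NeZero (2 : F)] (I : LieIdeal F 𝔤) {x : 𝔤} (hx : x ∈ I)
    {i j : ι} (hij : i ≠ j) :
    ∃ y ∈ I, ∀ a b, (y : Matrix ι ι F) a b =
      if Xor (a = i ∨ a = j) (b = i ∨ b = j) then (x : Matrix ι ι F) a b else 0 := by
  refine ⟨-(α i * α j)⁻¹ • ⁅skewBasis α i j, ⁅skewBasis α i j, x⁆⁆,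
    I.smul_mem _ (I.lie_mem (I.lie_mem hx)), fun a b => ?_⟩
  simp only [SetLike.val_smul, LieSubalgebra.coe_bracket, coe_skewBasis, Matrix.smul_apply,
    lie_skewSingle_lie_skewSingle_apply hα x.2 hij, smul_eq_mul, mul_ite, mul_zero]
  split_ifs
  · field_simp [hα i, hα j]
  · rfl

theorem exists_mem_apply_eq_zero [NeZero (2 : F)] (h4 : Fintype.card ι ≠ 4) (I : LieIdeal F 𝔤)
    {x : 𝔤} (hx : x ∈ I) {p q a b : ι} (hpq : p ≠ q) (hab : s(a, b) ≠ s(p, q)) :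
    ∃ y ∈ I, (y : Matrix ι ι F) p q = (x : Matrix ι ι F) p q ∧ (y : Matrix ι ι F) a b = 0 ∧
      ∀ c d, (x : Matrix ι ι F) c d = 0 → (y : Matrix ι ι F) c d = 0 := by
  by_cases hba : a = b
  · exact ⟨x, hx, rfl, hba ▸ apply_self_eq_zero_of_mem hα x.2 a, fun _ _ h => h⟩
  by_cases hmeet : Xor (p = a ∨ p = b) (q = a ∨ q = b)
  · obtain ⟨y, hyI, hy⟩ := exists_mem_apply_eq_ite_xor hα I hx hba
    exact ⟨y, hyI, by rw [hy, if_pos hmeet], by simp [hy], fun c d h => by simp [hy, h]⟩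
  obtain ⟨hap, haq, hbp, hbq⟩ : a ≠ p ∧ a ≠ q ∧ b ≠ p ∧ b ≠ q := by
    rw [Ne, Sym2.eq_iff] at hab
    grind
  obtain ⟨t, hta, htb, htp, htq⟩ := Fintype.exists_ne_of_card_ne_four h4 hba hap haq hbp hbq hpq
  obtain ⟨y, hyI, hy⟩ := exists_mem_apply_eq_ite_xor hα I hx hta.symm
  refine ⟨x - y, I.sub_mem hx hyI, ?_, ?_, fun c d h => by simp [hy, h]⟩
  · simp [hy, hap.symm, haq.symm, htp.symm, htq.symm]
  · simp [hy, Ne.symm hba, htb.symm]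

theorem exists_mem_apply_eq_zero_off_pair [NeZero (2 : F)] (h4 : Fintype.card ι ≠ 4)
    (I : LieIdeal F 𝔤) {x : 𝔤} (hx : x ∈ I) {p q : ι} (hpq : p ≠ q) :
    ∃ y ∈ I, (y : Matrix ι ι F) p q = (x : Matrix ι ι F) p q ∧
      ∀ a b, s(a, b) ≠ s(p, q) → (y : Matrix ι ι F) a b = 0 := by
  classical
  suffices key : ∀ T : Finset (ι × ι), (∀ c ∈ T, s(c.1, c.2) ≠ s(p, q)) →
      ∃ y ∈ I, (y : Matrix ι ι F) p q = (x : Matrix ι ι F) p q ∧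
        ∀ c ∈ T, (y : Matrix ι ι F) c.1 c.2 = 0 by
    obtain ⟨y, hyI, hypq, hy⟩ := key {c | s(c.1, c.2) ≠ s(p, q)} (by simp)
    exact ⟨y, hyI, hypq, fun a b hab => hy (a, b) (by simpa using hab)⟩
  intro T
  induction T using Finset.induction_on with
  | empty => exact fun _ => ⟨x, hx, rfl, by simp⟩
  | insert c T _ ih =>
    intro hT
    obtain ⟨y, hyI, hypq, hy⟩ := ih fun c hc => hT c (Finset.mem_insert_of_mem hc)
    obtain ⟨z, hzI, hzpq, hzc, hzy⟩ :=
      exists_mem_apply_eq_zero hα h4 I hyI hpq (hT c (Finset.mem_insert_self c T))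
    refine ⟨z, hzI, hzpq.trans hypq, ?_⟩
    simpa [hzc] using fun d hd => hzy _ _ (hy d hd)

theorem eq_smul_skewBasis {y : 𝔤} {p q : ι} (hpq : p ≠ q)
    (hy : ∀ a b, s(a, b) ≠ s(p, q) → (y : Matrix ι ι F) a b = 0) :
    y = ((y : Matrix ι ι F) p q / α q) • skewBasis α p q := by
  have hskew := (mem_skewAdjoint_diagonal_iff α).1 y.2 p q
  ext a b
  by_cases hab : s(a, b) = s(p, q)
  · rcases Sym2.eq_iff.1 hab with ⟨rfl, rfl⟩ | ⟨rfl, rfl⟩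
    · simp [skewSingle_apply, hpq.symm, hα]
    · simp only [SetLike.val_smul, coe_skewBasis, Matrix.smul_apply, skewSingle_apply, hpq,
        false_and, if_false, and_self, if_true, zero_sub, smul_eq_mul, mul_neg]
      field_simp [hα a]
      linear_combination hskew
  · have h₁ : ¬(p = a ∧ q = b) := fun h => hab (by rw [h.1, h.2])
    have h₂ : ¬(q = a ∧ p = b) := fun h => hab (by rw [h.1, h.2, Sym2.eq_swap])
    simp [hy a b hab, skewSingle_apply, h₁, h₂]

theorem eq_top_of_mem_of_apply_ne_zero [NeZero (2 : F)] (h4 : Fintype.card ι ≠ 4)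
    (I : LieIdeal F 𝔤) {x : 𝔤} (hx : x ∈ I) {p q : ι} (hxpq : (x : Matrix ι ι F) p q ≠ 0) :
    I = ⊤ := by
  have hpq : p ≠ q := by
    rintro rfl
    exact hxpq (apply_self_eq_zero_of_mem hα x.2 p)
  obtain ⟨y, hyI, hypq, hy⟩ := exists_mem_apply_eq_zero_off_pair hα h4 I hx hpq
  have hc : (y : Matrix ι ι F) p q / α q ≠ 0 := div_ne_zero (hypq ▸ hxpq) (hα q)
  have hbasis : skewBasis α p q ∈ I :=
    (I.toSubmodule.smul_mem_iff hc).1 (by rwa [← eq_smul_skewBasis hα hpq hy])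
  exact eq_top_of_forall_skewBasis_mem hα I (skewBasis_mem_of_skewBasis_mem hα I hpq hbasis)

theorem isSimple_skewAdjoint_diagonal [NeZero (2 : F)] (h3 : 2 < Fintype.card ι)
    (h4 : Fintype.card ι ≠ 4) : LieAlgebra.IsSimple F 𝔤 where
  eq_bot_or_eq_top I := by
    refine or_iff_not_imp_left.2 fun hI => ?_
    obtain ⟨x, hx, hx0⟩ : ∃ x ∈ I, x ≠ 0 := by simpa [LieSubmodule.eq_bot_iff] using hI
    obtain ⟨p, q, hxpq⟩ : ∃ p q, (x : Matrix ι ι F) p q ≠ 0 := by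
      by_contra! h
      exact hx0 (Subtype.ext (Matrix.ext h))
    exact eq_top_of_mem_of_apply_ne_zero hα h4 I hx hxpq
  non_abelian := by
    obtain ⟨i, j, k, hij, hik, hjk⟩ := Fintype.two_lt_card_iff.1 h3
    exact not_isLieAbelian hα hij hjk hik

end LieIdeal

end LieAlgebra.Orthogonal

/-- Let `F` be a field of characteristic `0`, `n ≥ 3` with
`n ≠ 4`, and `α₁, …, αₙ ∈ F` nonzero.  Then the Lie algebra of `n × n` matrices
`v` over `F` satisfying `αᵢ v_{ji} + αⱼ v_{ij} = 0` for all `i, j` (the matrices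
skew-adjoint with respect to `diag(α₁, …, αₙ)`), with the commutator bracket,
is a simple Lie algebra. -/
theorem skewAdjointMatrices_diagonal_isSimple
    {F : Type*} [Field F] [CharZero F]
    (n : ℕ) (hn : 3 ≤ n) (hn4 : n ≠ 4) (α : Fin n → F) (hα : ∀ i, α i ≠ 0) :
    LieAlgebra.IsSimple F
      ↥(skewAdjointMatricesLieSubalgebra (Matrix.diagonal α)) :=
  LieAlgebra.Orthogonal.isSimple_skewAdjoint_diagonal hα (by rwa [Fintype.card_fin])
    (by rwa [Fintype.card_fin])
end

section
/- Let J be a Jordan algebra with unit element 1 over a field F of characteristic ≠ 2. Then every triple derivation of J is a derivation of J; consequently TDer(J) = Der(J). -/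
/-!
Evaluating the triple-derivation identity at `x = y = z = 1` gives `D 1 = 3 • D 1`, so
`D 1 = 0` as `2` is invertible; evaluating it at `z = 1` then leaves exactly the Leibniz rule.
-/

section TripleDerivation

variable {F J : Type*} [Field F] [AddCommGroup J] [Module F J]

def IsDerivation (mul : J →ₗ[F] J →ₗ[F] J) (D : Module.End F J) : Prop :=
  ∀ x y : J, D (mul x y) = mul (D x) y + mul x (D y)

def IsTripleDerivation (mul : J →ₗ[F] J →ₗ[F] J) (D : Module.End F J) : Prop :=
  ∀ x y z : J, D (mul (mul x y) z)
    = mul (mul (D x) y) z + mul (mul x (D y)) z + mul (mul x y) (D z)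

theorem IsDerivation.isTripleDerivation {mul : J →ₗ[F] J →ₗ[F] J} {D : Module.End F J}
    (hD : IsDerivation mul D) : IsTripleDerivation mul D := by
  intro x y z
  rw [hD, hD, map_add, LinearMap.add_apply]

theorem IsTripleDerivation.map_one_eq_zero {mul : J →ₗ[F] J →ₗ[F] J} {D : Module.End F J}
    (hD : IsTripleDerivation mul D) (h2 : (2 : F) ≠ 0) {one : J}
    (hleft : ∀ x, mul one x = x) (hright : ∀ x, mul x one = x) : D one = 0 := by
  have h := hD one one one
  simp only [hleft, hright] at h
  have h2D : (2 : F) • D one = 0 := by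
    rw [two_smul]
    linear_combination (norm := abel) h.symm
  exact (smul_eq_zero.mp h2D).resolve_left h2

theorem IsTripleDerivation.isDerivation {mul : J →ₗ[F] J →ₗ[F] J} {D : Module.End F J}
    (hD : IsTripleDerivation mul D) (h2 : (2 : F) ≠ 0) {one : J}
    (hleft : ∀ x, mul one x = x) (hright : ∀ x, mul x one = x) : IsDerivation mul D := by
  intro x y
  simpa only [hright, hD.map_one_eq_zero h2 hleft hright, map_zero, add_zero] using hD x y one

end TripleDerivation

theorem tripleDerivation_eq_derivation_of_unital_general
    {F J : Type*} [Field F] (h2 : (2 : F) ≠ 0)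
    [AddCommGroup J] [Module F J]
    (mul : J →ₗ[F] J →ₗ[F] J)
    (comm : ∀ x y : J, mul x y = mul y x)
    (one : J) (hone : ∀ x : J, mul one x = x) :
    (∀ D : Module.End F J,
      (∀ x y z : J, D (mul (mul x y) z)
          = mul (mul (D x) y) z + mul (mul x (D y)) z + mul (mul x y) (D z)) →
      ∀ x y : J, D (mul x y) = mul (D x) y + mul x (D y))
    ∧ {D : Module.End F J | ∀ x y z : J, D (mul (mul x y) z)
          = mul (mul (D x) y) z + mul (mul x (D y)) z + mul (mul x y) (D z)}
      = {D : Module.End F J | ∀ x y : J, D (mul x y) = mul (D x) y + mul x (D y)} := by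
  have hright : ∀ x : J, mul x one = x := fun x => (comm x one).trans (hone x)
  have triple_imp : ∀ D, IsTripleDerivation mul D → IsDerivation mul D :=
    fun D hD => hD.isDerivation h2 hone hright
  exact ⟨triple_imp, Set.Subset.antisymm triple_imp fun _ hD => IsDerivation.isTripleDerivation hD⟩

/-- Let `J` be a Jordan algebra with unit over a field of
characteristic `≠ 2`.  Then every triple derivation of `J` is a derivation;
consequently `TDer J = Der J`. -/
theorem tripleDerivation_eq_derivation_of_unital
    {F J : Type*} [Field F] (h2 : (2 : F) ≠ 0)
    [AddCommGroup J] [Module F J]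
    (mul : J →ₗ[F] J →ₗ[F] J)
    (comm : ∀ x y : J, mul x y = mul y x)
    (jordan : ∀ x y : J, mul (mul (mul x x) y) x = mul (mul x x) (mul x y))
    (one : J) (hone : ∀ x : J, mul one x = x) :
    (∀ D : Module.End F J,
      (∀ x y z : J, D (mul (mul x y) z)
          = mul (mul (D x) y) z + mul (mul x (D y)) z + mul (mul x y) (D z)) →
      ∀ x y : J, D (mul x y) = mul (D x) y + mul x (D y))
    ∧ {D : Module.End F J | ∀ x y z : J, D (mul (mul x y) z)
          = mul (mul (D x) y) z + mul (mul x (D y)) z + mul (mul x y) (D z)}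
      = {D : Module.End F J | ∀ x y : J, D (mul x y) = mul (D x) y + mul x (D y)} :=
  tripleDerivation_eq_derivation_of_unital_general h2 mul comm one hone
end

section
/- Let F be a field of characteristic ≠ 2 and let J be the 2-dimensional commutative F-algebra with basis {e₁, e₂} and multiplication e₁∘e₁ = e₂∘e₂ = e₁ + e₂ and e₁∘e₂ = e₂∘e₁ = −e₁ − e₂. Then J is a Jordan algebra with (J∘J)∘J = 0, the linear map D₀ : J → J determined by D₀(e₁) = D₀(e₂) = e₁ is a triple derivation of J, but D₀ is not a derivation of J; in particular TDer(J) ≠ Der(J). -/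
/-!
Every product in `J` is a multiple of `e₁ + e₂ = (1, 1)`: with `φ (a, b) = a - b` one has
`x ∘ y = (φ x * φ y) • (1, 1)`, and `φ (1, 1) = 0`. Hence all triple products vanish, so the
Jordan identity and the triple-derivation identity hold trivially (both sides are `0`). On the
other hand `D₀ (e₁ ∘ e₁) = D₀ (e₁ + e₂) = 2 e₁`, while `D₀ e₁ ∘ e₁ + e₁ ∘ D₀ e₁ = 2 (e₁ + e₂)`,
and these differ as soon as `2 ≠ 0`.
-/

section Derivations

variable {R M : Type*} [CommSemiring R] [AddCommMonoid M] [Module R M]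

def IsDerivationOf (mul : M →ₗ[R] M →ₗ[R] M) (D : Module.End R M) : Prop :=
  ∀ x y, D (mul x y) = mul (D x) y + mul x (D y)

def IsTripleDerivationOf (mul : M →ₗ[R] M →ₗ[R] M) (D : Module.End R M) : Prop :=
  ∀ x y z, D (mul (mul x y) z) = mul (mul (D x) y) z + mul (mul x (D y)) z + mul (mul x y) (D z)

variable {mul : M →ₗ[R] M →ₗ[R] M}

theorem jordan_identity_of_mul_mul_eq_zero (h : ∀ x y z, mul (mul x y) z = 0) (x y : M) :
    mul (mul (mul x x) y) x = mul (mul x x) (mul x y) := by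
  rw [h, h]

theorem isTripleDerivationOf_of_mul_mul_eq_zero (h : ∀ x y z, mul (mul x y) z = 0)
    (D : Module.End R M) : IsTripleDerivationOf mul D := by
  intro x y z
  simp only [h, map_zero, add_zero]

end Derivations

section TwoDimensional

variable {F : Type*} [CommRing F] {mul : (F × F) →ₗ[F] (F × F) →ₗ[F] (F × F)}

theorem mul_eq_smul_of_basis
    (h11 : mul (1, 0) (1, 0) = (1, 1)) (h22 : mul (0, 1) (0, 1) = (1, 1))
    (h12 : mul (1, 0) (0, 1) = (-1, -1)) (h21 : mul (0, 1) (1, 0) = (-1, -1)) (x y : F × F) :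
    mul x y = ((x.1 - x.2) * (y.1 - y.2)) • ((1, 1) : F × F) := by
  obtain ⟨a, b⟩ := x
  obtain ⟨c, d⟩ := y
  have basis_expansion : ∀ s t : F, ((s, t) : F × F) = s • (1, 0) + t • (0, 1) := by
    intro s t
    simp
  rw [basis_expansion a b, basis_expansion c d]
  simp only [map_add, map_smul, LinearMap.add_apply, LinearMap.smul_apply, h11, h22, h12, h21]
  simp only [Prod.smul_mk, Prod.mk_add_mk, smul_eq_mul, Prod.ext_iff]
  constructor <;> ring

theorem not_isDerivationOf_of_basis (h2 : (2 : F) ≠ 0) (h11 : mul (1, 0) (1, 0) = (1, 1))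
    {D : Module.End F (F × F)} (hD₁ : D (1, 0) = (1, 0)) (hD₂ : D (0, 1) = (1, 0)) :
    ¬ IsDerivationOf mul D := by
  intro hD
  have hD_one_one : D (1, 1) = (2, 0) := by
    rw [show ((1, 1) : F × F) = (1, 0) + (0, 1) by simp, map_add, hD₁, hD₂, Prod.mk_add_mk]
    norm_num [one_add_one_eq_two]
  have leibniz := hD (1, 0) (1, 0)
  rw [h11, hD₁, h11, hD_one_one, Prod.mk_add_mk, Prod.ext_iff] at leibniz
  exact h2 (by simpa [one_add_one_eq_two] using leibniz.2.symm)

end TwoDimensional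

/-- Let `F` be a field of characteristic `≠ 2` and `J` the
two-dimensional commutative algebra `F × F` with basis `e₁ = (1,0)`,
`e₂ = (0,1)` and multiplication `e₁∘e₁ = e₂∘e₂ = e₁ + e₂`,
`e₁∘e₂ = e₂∘e₁ = -e₁ - e₂`.  Then `J` is a Jordan algebra with
`(J∘J)∘J = 0`, the linear map `D₀` with `D₀ e₁ = D₀ e₂ = e₁` is a triple
derivation but not a derivation; in particular `TDer J ≠ Der J`. -/
theorem exists_tripleDerivation_not_derivation
    {F : Type*} [Field F] (h2 : (2 : F) ≠ 0)
    (mul : (F × F) →ₗ[F] (F × F) →ₗ[F] (F × F))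
    (h11 : mul ((1 : F), (0 : F)) ((1 : F), (0 : F)) = ((1 : F), (1 : F)))
    (h22 : mul ((0 : F), (1 : F)) ((0 : F), (1 : F)) = ((1 : F), (1 : F)))
    (h12 : mul ((1 : F), (0 : F)) ((0 : F), (1 : F)) = ((-1 : F), (-1 : F)))
    (h21 : mul ((0 : F), (1 : F)) ((1 : F), (0 : F)) = ((-1 : F), (-1 : F)))
    (D₀ : Module.End F (F × F))
    (hD₀₁ : D₀ ((1 : F), (0 : F)) = ((1 : F), (0 : F)))
    (hD₀₂ : D₀ ((0 : F), (1 : F)) = ((1 : F), (0 : F))) :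
    -- `J` is a Jordan algebra
    (∀ x y : F × F, mul x y = mul y x)
    ∧ (∀ x y : F × F, mul (mul (mul x x) y) x = mul (mul x x) (mul x y))
    -- with `(J∘J)∘J = 0`
    ∧ (∀ x y z : F × F, mul (mul x y) z = 0)
    -- `D₀` is a triple derivation of `J`
    ∧ (∀ x y z : F × F, D₀ (mul (mul x y) z)
        = mul (mul (D₀ x) y) z + mul (mul x (D₀ y)) z + mul (mul x y) (D₀ z))
    -- but `D₀` is not a derivation of `J`
    ∧ ¬ (∀ x y : F × F, D₀ (mul x y) = mul (D₀ x) y + mul x (D₀ y))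
    -- in particular `TDer J ≠ Der J`
    ∧ {D : Module.End F (F × F) | ∀ x y z : F × F, D (mul (mul x y) z)
          = mul (mul (D x) y) z + mul (mul x (D y)) z + mul (mul x y) (D z)}
        ≠ {D : Module.End F (F × F) |
            ∀ x y : F × F, D (mul x y) = mul (D x) y + mul x (D y)} := by
  have hmul := mul_eq_smul_of_basis h11 h22 h12 h21
  have mul_mul_eq_zero : ∀ x y z, mul (mul x y) z = 0 := by
    intro x y z
    simp [hmul]
  have triple : IsTripleDerivationOf mul D₀ :=
    isTripleDerivationOf_of_mul_mul_eq_zero mul_mul_eq_zero D₀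
  have not_derivation : ¬ IsDerivationOf mul D₀ := not_isDerivationOf_of_basis h2 h11 hD₀₁ hD₀₂
  exact ⟨fun x y => by rw [hmul, hmul, mul_comm],
    jordan_identity_of_mul_mul_eq_zero mul_mul_eq_zero, mul_mul_eq_zero, triple, not_derivation,
    fun hsets => not_derivation (hsets ▸ triple : D₀ ∈ {D | IsDerivationOf mul D})⟩
end

section
/- Let L be a Lie algebra over a field with center Z(L) = {0}, and suppose L = L₁ ⊕ L₂ is the internal direct sum of two Lie ideals L₁ and L₂. For i = 1, 2 let 𝔱ᵢ = {D ∈ TDer(L) | D(Lᵢ) ⊆ Lᵢ and D vanishes on the other summand}. Then each 𝔱ᵢ is a Lie ideal of the Lie algebra TDer(L), TDer(L) is the internal direct sum 𝔱₁ ⊕ 𝔱₂, and restriction to Lᵢ gives a Lie algebra isomorphism 𝔱ᵢ ≅ TDer(Lᵢ). -/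
attribute [local instance 100] LieRing.ofAssociativeRing

section Defs

variable (F : Type*) {L : Type*} [Field F] [LieRing L] [LieAlgebra F L]

/-- The triple derivations of a Lie algebra, as a Lie subalgebra of the
endomorphism algebra of the underlying module. -/
def tderSet : LieSubalgebra F (Module.End F L) where
  carrier := {D | ∀ x y z : L,
    D ⁅⁅x, y⁆, z⁆ = ⁅⁅D x, y⁆, z⁆ + ⁅⁅x, D y⁆, z⁆ + ⁅⁅x, y⁆, D z⁆}
  add_mem' := by
    intro D E hD hE
    simp only [Set.mem_setOf_eq] at hD hE ⊢
    intro x y z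
    simp only [LinearMap.add_apply, hD, hE, add_lie, lie_add]
    abel
  zero_mem' := by
    simp only [Set.mem_setOf_eq]
    intro x y z; simp
  smul_mem' := by
    intro c D hD
    simp only [Set.mem_setOf_eq] at hD ⊢
    intro x y z
    simp only [LinearMap.smul_apply, hD, smul_lie, lie_smul, smul_add]
  lie_mem' := by
    intro D E hD hE
    simp only [Set.mem_setOf_eq] at hD hE ⊢
    intro x y z
    simp only [LieRing.of_associative_ring_bracket, LinearMap.sub_apply,
      Module.End.mul_apply, hD, hE, map_add, map_sub, LinearMap.add_apply,
      LinearMap.sub_apply, add_lie, lie_add, sub_lie, lie_sub]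
    abel

/-- The triple derivations of a Lie algebra preserving the Lie ideal `L₁` and
vanishing on the Lie ideal `L₂`, as a Lie subalgebra of the endomorphism
algebra. -/
def tderPart (L₁ L₂ : LieIdeal F L) : LieSubalgebra F (Module.End F L) where
  carrier := {D | (∀ x y z : L,
      D ⁅⁅x, y⁆, z⁆ = ⁅⁅D x, y⁆, z⁆ + ⁅⁅x, D y⁆, z⁆ + ⁅⁅x, y⁆, D z⁆)
    ∧ (∀ a ∈ L₁, D a ∈ L₁) ∧ (∀ a ∈ L₂, D a = 0)}
  add_mem' := by
    rintro D E ⟨hD, hD1, hD2⟩ ⟨hE, hE1, hE2⟩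
    refine ⟨(tderSet F).add_mem hD hE, fun a ha => ?_, fun a ha => ?_⟩
    · simpa using L₁.add_mem (hD1 a ha) (hE1 a ha)
    · simp [hD2 a ha, hE2 a ha]
  zero_mem' := by
    exact ⟨(tderSet F).zero_mem, by simp, by simp⟩
  smul_mem' := by
    rintro c D ⟨hD, hD1, hD2⟩
    refine ⟨(tderSet F).smul_mem c hD, fun a ha => ?_, fun a ha => ?_⟩
    · simpa using L₁.smul_mem c (hD1 a ha)
    · simp [hD2 a ha]
  lie_mem' := by
    rintro D E ⟨hD, hD1, hD2⟩ ⟨hE, hE1, hE2⟩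
    refine ⟨(tderSet F).lie_mem hD hE, fun a ha => ?_, fun a ha => ?_⟩
    · simpa [LieRing.of_associative_ring_bracket] using
        L₁.sub_mem (hD1 _ (hE1 a ha)) (hE1 _ (hD1 a ha))
    · simp [LieRing.of_associative_ring_bracket, hD2 a ha, hE2 a ha,
        hD2 (E a) (by rw [hE2 a ha]; exact L₂.zero_mem),
        hE2 (D a) (by rw [hD2 a ha]; exact L₂.zero_mem)]

end Defs

/-!
Since `L₁ ⊓ L₂ = ⊥`, the two summands commute. For a triple derivation `D` and `a ∈ L₁` write
`D a = u + v` with `u ∈ L₁`, `v ∈ L₂`; applying `D` to `⁅⁅a, b⁆, c⁆ = 0` for `b, c ∈ L₂` gives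
`⁅⁅v, b⁆, c⁆ = 0`, so first `⁅v, b⁆` and then `v` are central, hence zero. So every triple
derivation preserves both summands: this makes each `𝔱ᵢ` an ideal, and splits `D` as the sum of
its restrictions to `L₁` and `L₂`, each extended by zero. The projection `L → L₁` along `L₂` is a
Lie algebra homomorphism, so extending a triple derivation of `L₁` by zero gives one of `L`; this
is the inverse of restriction `𝔱₁ → TDer L₁`.
-/

section

variable {F L : Type*} [Field F] [LieRing L] [LieAlgebra F L] {L₁ L₂ : LieIdeal F L}

theorem lie_eq_zero_of_disjoint (h : Disjoint L₁ L₂) {a b : L} (ha : a ∈ L₁) (hb : b ∈ L₂) :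
    ⁅a, b⁆ = 0 := by
  have hab : ⁅a, b⁆ ∈ L₁ ⊓ L₂ := LieSubmodule.lie_le_inf L₁ L₂ (LieSubmodule.lie_mem_lie ha hb)
  rwa [h.eq_bot, LieSubmodule.mem_bot] at hab

theorem exists_add_eq_of_codisjoint (h : Codisjoint L₁ L₂) (x : L) :
    ∃ a b, a ∈ L₁ ∧ b ∈ L₂ ∧ a + b = x :=
  Submodule.codisjoint_iff_exists_add_eq.mp (LieSubmodule.codisjoint_toSubmodule.mpr h) x

theorem eq_zero_of_forall_lie_eq_zero (hcenter : LieAlgebra.center F L = ⊥)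
    (hc : IsCompl L₁ L₂) {z : L} (hz : z ∈ L₂) (h : ∀ c ∈ L₂, ⁅z, c⁆ = 0) : z = 0 := by
  have hzc : z ∈ LieAlgebra.center F L := by
    rw [LieModule.mem_maxTrivSubmodule]
    intro x
    obtain ⟨x₁, x₂, hx₁, hx₂, rfl⟩ := exists_add_eq_of_codisjoint hc.codisjoint x
    rw [add_lie, lie_eq_zero_of_disjoint hc.disjoint hx₁ hz, ← lie_skew, h x₂ hx₂, neg_zero,
      zero_add]
  rwa [hcenter, LieSubmodule.mem_bot] at hzc

noncomputable def lieProj (hc : IsCompl L₁ L₂) : L →ₗ[F] L₁ :=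
  (L₁ : Submodule F L).projectionOnto L₂ (LieSubmodule.isCompl_toSubmodule.mpr hc)

theorem lieProj_apply_of_mem_left (hc : IsCompl L₁ L₂) {x : L} (hx : x ∈ L₁) :
    lieProj hc x = ⟨x, hx⟩ :=
  Submodule.projectionOnto_apply_of_mem_left _ hx

theorem lieProj_apply_of_mem_right (hc : IsCompl L₁ L₂) {x : L} (hx : x ∈ L₂) :
    lieProj hc x = 0 :=
  Submodule.projectionOnto_apply_of_mem_right _ hx

theorem lieProj_add_lieProj (hc : IsCompl L₁ L₂) (x : L) :
    (lieProj hc x : L) + lieProj hc.symm x = x :=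
  Submodule.projection_add_projection_eq_self _ x

theorem lieProj_lie (hc : IsCompl L₁ L₂) (x y : L) :
    lieProj hc ⁅x, y⁆ = ⁅lieProj hc x, lieProj hc y⁆ := by
  set x₁ := lieProj hc x
  set y₁ := lieProj hc y
  set x₂ := lieProj hc.symm x
  set y₂ := lieProj hc.symm y
  have hxy : ⁅x, y⁆ = ⁅(x₁ : L), (y₁ : L)⁆ + ⁅(x₂ : L), (y₂ : L)⁆ := by
    rw [← lieProj_add_lieProj hc x, ← lieProj_add_lieProj hc y, add_lie, lie_add, lie_add,
      lie_eq_zero_of_disjoint hc.disjoint x₁.2 y₂.2,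
      lie_eq_zero_of_disjoint hc.symm.disjoint x₂.2 y₁.2, add_zero, zero_add]
  rw [hxy, map_add, lieProj_apply_of_mem_right hc (L₂.lie_mem y₂.2), add_zero,
    lieProj_apply_of_mem_left hc (L₁.lie_mem y₁.2)]
  rfl

theorem lie_lie_eq_coe_lieProj (hc : IsCompl L₁ L₂) {x y z : L} (h : ⁅⁅x, y⁆, z⁆ ∈ L₁) :
    ⁅⁅x, y⁆, z⁆ = (⁅⁅lieProj hc x, lieProj hc y⁆, lieProj hc z⁆ : L₁) := by
  rw [← lieProj_lie, ← lieProj_lie, lieProj_apply_of_mem_left hc h]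

theorem map_mem_of_mem_tderSet (hcenter : LieAlgebra.center F L = ⊥) (hc : IsCompl L₁ L₂)
    {D : Module.End F L} (hD : D ∈ tderSet F) {a : L} (ha : a ∈ L₁) : D a ∈ L₁ := by
  obtain ⟨u, v, hu, hv, huv⟩ := exists_add_eq_of_codisjoint hc.codisjoint (D a)
  have hvbc : ∀ b ∈ L₂, ∀ c ∈ L₂, ⁅⁅v, b⁆, c⁆ = 0 := by
    intro b hb c hc₂
    have hDabc := hD a b c
    rw [lie_eq_zero_of_disjoint hc.disjoint ha hb,
      lie_eq_zero_of_disjoint hc.disjoint (lie_mem_left F L L₁ a (D b) ha) hc₂, ← huv,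
      add_lie, lie_eq_zero_of_disjoint hc.disjoint hu hb] at hDabc
    simpa using hDabc.symm
  have hv₀ : v = 0 := eq_zero_of_forall_lie_eq_zero hcenter hc hv fun b hb =>
    eq_zero_of_forall_lie_eq_zero hcenter hc (L₂.lie_mem hb) (hvbc b hb)
  rw [← huv, hv₀, add_zero]
  exact hu

theorem lie_mem_tderPart {D E : Module.End F L} (hD : D ∈ tderSet F)
    (hD₁ : ∀ a ∈ L₁, D a ∈ L₁) (hD₂ : ∀ a ∈ L₂, D a ∈ L₂) (hE : E ∈ tderPart F L₁ L₂) :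
    ⁅D, E⁆ ∈ tderPart F L₁ L₂ := by
  obtain ⟨hE, hE₁, hE₂⟩ := hE
  refine ⟨(tderSet F).lie_mem hD hE, fun a ha => ?_, fun a ha => ?_⟩
  · simpa [LieRing.of_associative_ring_bracket] using
      sub_mem (hD₁ _ (hE₁ a ha)) (hE₁ _ (hD₁ a ha))
  · simp [LieRing.of_associative_ring_bracket, hE₂ a ha, hE₂ (D a) (hD₂ a ha)]

theorem tderPart_inf_tderPart_eq_bot (h : Codisjoint L₁ L₂) :
    (tderPart F L₁ L₂).toSubmodule ⊓ (tderPart F L₂ L₁).toSubmodule = ⊥ := by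
  refine (Submodule.eq_bot_iff _).mpr fun D hD => LinearMap.ext fun x => ?_
  obtain ⟨⟨-, -, hD₂⟩, ⟨-, -, hD₁⟩⟩ := Submodule.mem_inf.mp hD
  obtain ⟨a, b, ha, hb, rfl⟩ := exists_add_eq_of_codisjoint h x
  rw [map_add, hD₁ a ha, hD₂ b hb, add_zero, LinearMap.zero_apply]

theorem restrict_mem_tderSet {I : LieIdeal F L} {D : Module.End F L} (hD : D ∈ tderSet F)
    (hI : ∀ a ∈ (I : Submodule F L), D a ∈ (I : Submodule F L)) :
    D.restrict hI ∈ tderSet F (L := I) :=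
  fun x y z => Subtype.ext (hD x y z)

noncomputable def extendByZero (hc : IsCompl L₁ L₂) (δ : Module.End F L₁) : Module.End F L :=
  (L₁ : Submodule F L).subtype ∘ₗ δ ∘ₗ lieProj hc

theorem extendByZero_apply (hc : IsCompl L₁ L₂) (δ : Module.End F L₁) (x : L) :
    extendByZero hc δ x = δ (lieProj hc x) :=
  rfl

theorem extendByZero_mem_tderPart (hc : IsCompl L₁ L₂) {δ : Module.End F L₁}
    (hδ : δ ∈ tderSet F (L := L₁)) : extendByZero hc δ ∈ tderPart F L₁ L₂ := by
  set E := extendByZero hc δ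
  have hE₁ (x : L) : E x ∈ L₁ := (δ (lieProj hc x)).2
  have hπE (x : L) : lieProj hc (E x) = δ (lieProj hc x) := lieProj_apply_of_mem_left hc (hE₁ x)
  refine ⟨fun x y z => ?_, fun a _ => hE₁ a, fun b hb => ?_⟩
  · rw [lie_lie_eq_coe_lieProj hc (lie_mem_left F L L₁ _ z (lie_mem_left F L L₁ _ y (hE₁ x))),
      lie_lie_eq_coe_lieProj hc (lie_mem_left F L L₁ _ z (lie_mem_right F L L₁ x _ (hE₁ y))),
      lie_lie_eq_coe_lieProj hc (lie_mem_right F L L₁ _ _ (hE₁ z)), hπE, hπE, hπE,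
      extendByZero_apply, lieProj_lie, lieProj_lie, hδ]
    rfl
  · rw [extendByZero_apply, lieProj_apply_of_mem_right hc hb, map_zero]
    rfl

theorem tderPart_sup_tderPart_eq_tderSet (hcenter : LieAlgebra.center F L = ⊥)
    (hc : IsCompl L₁ L₂) :
    (tderPart F L₁ L₂).toSubmodule ⊔ (tderPart F L₂ L₁).toSubmodule
      = (tderSet F (L := L)).toSubmodule := by
  refine le_antisymm (sup_le (fun D hD => hD.1) (fun D hD => hD.1)) fun D hD => ?_
  have h₁ := restrict_mem_tderSet hD fun _ => map_mem_of_mem_tderSet hcenter hc hD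
  have h₂ := restrict_mem_tderSet hD fun _ => map_mem_of_mem_tderSet hcenter hc.symm hD
  refine Submodule.mem_sup.mpr ⟨_, extendByZero_mem_tderPart hc h₁,
    _, extendByZero_mem_tderPart hc.symm h₂, LinearMap.ext fun x => ?_⟩
  change D (lieProj hc x) + D (lieProj hc.symm x) = D x
  rw [← map_add, lieProj_add_lieProj]

noncomputable def tderPartEquiv (hc : IsCompl L₁ L₂) :
    tderPart F L₁ L₂ ≃ₗ⁅F⁆ tderSet F (L := L₁) where
  toFun D := ⟨D.1.restrict D.2.2.1, restrict_mem_tderSet D.2.1 D.2.2.1⟩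
  map_add' _ _ := rfl
  map_smul' _ _ := rfl
  map_lie' := rfl
  invFun δ := ⟨extendByZero hc δ, extendByZero_mem_tderPart hc δ.2⟩
  left_inv D := by
    refine Subtype.ext (LinearMap.ext fun x => ?_)
    obtain ⟨-, -, hD₂⟩ := D.2
    change D.1 (lieProj hc x) = D.1 x
    conv_rhs => rw [← lieProj_add_lieProj hc x, map_add, hD₂ _ (lieProj hc.symm x).2, add_zero]
  right_inv δ := Subtype.ext (LinearMap.ext fun x => by
    change δ.1 (lieProj hc x) = δ.1 x
    rw [lieProj_apply_of_mem_left hc x.2])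

end

/-- Let `L` be a Lie algebra over a field with trivial center
which is the internal direct sum of two Lie ideals `L₁ ⊕ L₂`.  For `i = 1, 2`
let `𝔱ᵢ` be the set of triple derivations of `L` preserving `Lᵢ` and vanishing
on the other summand.  Then each `𝔱ᵢ` is a Lie ideal of `TDer L`, `TDer L` is
the internal direct sum `𝔱₁ ⊕ 𝔱₂`, and restriction to `Lᵢ` gives a Lie algebra
isomorphism `𝔱ᵢ ≅ TDer Lᵢ`. -/
theorem lie_tripleDerivation_algebra_decomposition
    {F L : Type*} [Field F] [LieRing L] [LieAlgebra F L]
    (hcenter : LieAlgebra.center F L = ⊥)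
    (L₁ L₂ : LieIdeal F L)
    (hdisj : L₁ ⊓ L₂ = ⊥)
    (hsum : L₁ ⊔ L₂ = ⊤) :
    -- `𝔱₁` and `𝔱₂` are Lie ideals of `TDer L`
    (∀ D ∈ tderSet F (L := L), ∀ E ∈ tderPart F L₁ L₂, ⁅D, E⁆ ∈ tderPart F L₁ L₂)
    ∧ (∀ D ∈ tderSet F (L := L), ∀ E ∈ tderPart F L₂ L₁, ⁅D, E⁆ ∈ tderPart F L₂ L₁)
    -- `TDer L = 𝔱₁ ⊕ 𝔱₂` (internal direct sum)
    ∧ (tderPart F L₁ L₂).toSubmodule ⊓ (tderPart F L₂ L₁).toSubmodule = ⊥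
    ∧ (tderPart F L₁ L₂).toSubmodule ⊔ (tderPart F L₂ L₁).toSubmodule
        = (tderSet F (L := L)).toSubmodule
    -- restriction to `L₁` is a Lie algebra isomorphism `𝔱₁ ≅ TDer L₁`
    ∧ (∃ e : ↥(tderPart F L₁ L₂) ≃ₗ⁅F⁆ ↥(tderSet F (L := ↥L₁)),
        ∀ D : ↥(tderPart F L₁ L₂), ∀ x : L₁,
          (((e D : Module.End F L₁) x : L₁) : L) = (D : Module.End F L) (x : L))
    -- restriction to `L₂` is a Lie algebra isomorphism `𝔱₂ ≅ TDer L₂`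
    ∧ (∃ e : ↥(tderPart F L₂ L₁) ≃ₗ⁅F⁆ ↥(tderSet F (L := ↥L₂)),
        ∀ D : ↥(tderPart F L₂ L₁), ∀ x : L₂,
          (((e D : Module.End F L₂) x : L₂) : L) = (D : Module.End F L) (x : L)) := by
  have hc : IsCompl L₁ L₂ := ⟨disjoint_iff.mpr hdisj, codisjoint_iff.mpr hsum⟩
  have hpres₁ {D} (hD : D ∈ tderSet F) : ∀ a ∈ L₁, D a ∈ L₁ :=
    fun _ => map_mem_of_mem_tderSet hcenter hc hD
  have hpres₂ {D} (hD : D ∈ tderSet F) : ∀ a ∈ L₂, D a ∈ L₂ :=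
    fun _ => map_mem_of_mem_tderSet hcenter hc.symm hD
  exact ⟨fun D hD _ => lie_mem_tderPart hD (hpres₁ hD) (hpres₂ hD),
    fun D hD _ => lie_mem_tderPart hD (hpres₂ hD) (hpres₁ hD),
    tderPart_inf_tderPart_eq_bot hc.codisjoint,
    tderPart_sup_tderPart_eq_tderSet hcenter hc,
    ⟨tderPartEquiv hc, fun _ _ => rfl⟩, ⟨tderPartEquiv hc.symm, fun _ _ => rfl⟩⟩
end
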